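/- Under the SAEF-SGD-with-momentum dynamics with learning rates 0 < η_t ≤ η_max, for every β₁ with 0 < β₁ < δ/(1−δ) and every t ≥ 0, the server error satisfies E‖e_{t+1}‖² ≤ (1−δ)/(1−√(1−δ))² · [2(2−δ)(1 + 1/β₁)/(1 − (1−δ)(1+β₁))] · η_max²(M² + σ²)/(1−μ)². -/

import Mathlib

/-!
Momentum, worker error and server error each satisfy a linear recursion
`u_{t+1} ≤ a u_t + v_t` with `u_0 = 0` and `a < 1`, so they stay below the fixed point
`sup v / (1 - a)`. The recursions come from Young's inequality
`‖x + y‖² ≤ (1 + β)‖x‖² + (1 + 1/β)‖y‖²` combined with the contraction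
`‖v - C v‖² ≤ (1 - δ)‖v‖²`: the workers use `β = β₁`, the server the optimal
`β = (1 - s)/s` with `s = √(1 - δ)`. The server is fed by the average of the compressed worker
updates, whose second moment is at most `2(2 - δ)` times that of the updates.
-/

open MeasureTheory Finset

lemma add_sq_le_mul_sq_add_mul_sq (a b : ℝ) {c : ℝ} (hc : 0 < c) :
    (a + b) ^ 2 ≤ (1 + c) * a ^ 2 + (1 + 1 / c) * b ^ 2 := by
  have hgap : (1 + c) * a ^ 2 + (1 + 1 / c) * b ^ 2 - (a + b) ^ 2 = (c * a - b) ^ 2 / c := by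
    field_simp; ring
  linarith [div_nonneg (sq_nonneg (c * a - b)) hc.le]

/-- The compressor is not assumed measurable, so the error sequences need not be integrable
(and their Bochner integrals may be junk); second-moment bounds are therefore carried by
integrable majorants. -/
def HasIntegrableMajorant {Ω : Type*} [MeasurableSpace Ω] (P : Measure Ω) (f : Ω → ℝ) (c : ℝ) :
    Prop :=
  ∃ F : Ω → ℝ, Integrable F P ∧ (∀ ω, f ω ≤ F ω) ∧ ∫ ω, F ω ∂P ≤ c

namespace HasIntegrableMajorant

variable {Ω : Type*} [MeasurableSpace Ω] {P : Measure Ω} {f g : Ω → ℝ} {a c c' : ℝ}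

lemma of_integrable (hf : Integrable f P) (hc : ∫ ω, f ω ∂P ≤ c) :
    HasIntegrableMajorant P f c :=
  ⟨f, hf, fun _ => le_rfl, hc⟩

lemma of_nonpos (hf : ∀ ω, f ω ≤ 0) (hc : 0 ≤ c) : HasIntegrableMajorant P f c :=
  ⟨0, integrable_zero _ _ _, hf, by simpa using hc⟩

lemma mono (h : HasIntegrableMajorant P f c) (hgf : ∀ ω, g ω ≤ f ω) (hc : c ≤ c') :
    HasIntegrableMajorant P g c' :=
  let ⟨F, hFi, hfF, hFc⟩ := h
  ⟨F, hFi, fun ω => (hgf ω).trans (hfF ω), hFc.trans hc⟩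

lemma add (hf : HasIntegrableMajorant P f c) (hg : HasIntegrableMajorant P g c') :
    HasIntegrableMajorant P (fun ω => f ω + g ω) (c + c') :=
  let ⟨F, hFi, hfF, hFc⟩ := hf
  let ⟨G, hGi, hgG, hGc⟩ := hg
  ⟨fun ω => F ω + G ω, hFi.add hGi, fun ω => add_le_add (hfF ω) (hgG ω),
    by rw [integral_add hFi hGi]; exact add_le_add hFc hGc⟩

lemma const_mul (h : HasIntegrableMajorant P f c) (ha : 0 ≤ a) :
    HasIntegrableMajorant P (fun ω => a * f ω) (a * c) :=
  let ⟨F, hFi, hfF, hFc⟩ := h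
  ⟨fun ω => a * F ω, hFi.const_mul a, fun ω => mul_le_mul_of_nonneg_left (hfF ω) ha,
    by rw [integral_const_mul]; exact mul_le_mul_of_nonneg_left hFc ha⟩

lemma sum {ι : Type*} (s : Finset ι) {f : ι → Ω → ℝ} {c : ι → ℝ}
    (h : ∀ i ∈ s, HasIntegrableMajorant P (f i) (c i)) :
    HasIntegrableMajorant P (fun ω => ∑ i ∈ s, f i ω) (∑ i ∈ s, c i) := by
  classical
  induction s using Finset.induction_on with
  | empty => exact of_nonpos (fun _ => by simp) (by simp)
  | insert i s hi ih =>
    simp only [sum_insert hi]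
    exact (h i (mem_insert_self i s)).add (ih fun j hj => h j (mem_insert_of_mem hj))

lemma nonneg (h : HasIntegrableMajorant P f c) (hf : ∀ ω, 0 ≤ f ω) : 0 ≤ c :=
  let ⟨_, _, hfF, hFc⟩ := h
  (integral_nonneg fun ω => (hf ω).trans (hfF ω)).trans hFc

lemma integral_le (h : HasIntegrableMajorant P f c) (hf : ∀ ω, 0 ≤ f ω) :
    ∫ ω, f ω ∂P ≤ c :=
  let ⟨_, hFi, hfF, hFc⟩ := h
  (integral_mono_of_nonneg (.of_forall hf) hFi (.of_forall hfF)).trans hFc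

lemma of_le_mul_add {u v : ℕ → Ω → ℝ} {B : ℝ} (ha0 : 0 ≤ a) (ha1 : a < 1) (hB : 0 ≤ B)
    (hu0 : ∀ ω, u 0 ω ≤ 0) (hu : ∀ t ω, u (t + 1) ω ≤ a * u t ω + v t ω)
    (hv : ∀ t, HasIntegrableMajorant P (v t) B) (t : ℕ) :
    HasIntegrableMajorant P (u t) (B / (1 - a)) := by
  induction t with
  | zero => exact of_nonpos hu0 (div_nonneg hB (by linarith))
  | succ t ih =>
    refine ((ih.const_mul ha0).add (hv t)).mono (hu t) (le_of_eq ?_)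
    field_simp [(by linarith : (1 - a) ≠ 0)]
    ring

end HasIntegrableMajorant

open HasIntegrableMajorant

section ErrorFeedback

variable {E : Type*} [SeminormedAddCommGroup E] {Ω : Type*} [MeasurableSpace Ω] {P : Measure Ω}

lemma norm_add_sq_le_mul_sq_add_mul_sq (x y : E) {c : ℝ} (hc : 0 < c) :
    ‖x + y‖ ^ 2 ≤ (1 + c) * ‖x‖ ^ 2 + (1 + 1 / c) * ‖y‖ ^ 2 :=
  (pow_le_pow_left₀ (norm_nonneg _) (norm_add_le x y) 2).trans
    (add_sq_le_mul_sq_add_mul_sq _ _ hc)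

def IsApproxCompressor (δ : ℝ) (C : E → E) : Prop :=
  ∀ v, ‖C v - v‖ ^ 2 ≤ (1 - δ) * ‖v‖ ^ 2

namespace IsApproxCompressor

variable {δ : ℝ} {C : E → E}

lemma norm_sub_apply_sq_le (hC : IsApproxCompressor δ C) (v : E) :
    ‖v - C v‖ ^ 2 ≤ (1 - δ) * ‖v‖ ^ 2 := by
  rw [norm_sub_rev]; exact hC v

lemma norm_apply_sq_le (hC : IsApproxCompressor δ C) (v : E) :
    ‖C v‖ ^ 2 ≤ 2 * (2 - δ) * ‖v‖ ^ 2 := by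
  have h := norm_add_sq_le_mul_sq_add_mul_sq (C v - v) v one_pos
  rw [sub_add_cancel] at h
  linarith [hC v]

end IsApproxCompressor

lemma error_feedback_update_majorant {C : E → E} {δ β X : ℝ} (hC : IsApproxCompressor δ C)
    (hδ : δ ≤ 1) (hβ : 0 < β) (hρ : (1 - δ) * (1 + β) < 1) {e Δ x : ℕ → Ω → E}
    (he0 : ∀ ω, e 0 ω = 0) (hΔ : ∀ t ω, Δ (t + 1) ω = e t ω + x t ω)
    (he : ∀ t ω, e (t + 1) ω = Δ (t + 1) ω - C (Δ (t + 1) ω))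
    (hx : ∀ t, HasIntegrableMajorant P (fun ω => ‖x t ω‖ ^ 2) X) (t : ℕ) :
    HasIntegrableMajorant P (fun ω => ‖Δ (t + 1) ω‖ ^ 2)
      ((1 + 1 / β) * X / (1 - (1 - δ) * (1 + β))) := by
  have hX : 0 ≤ X := (hx 0).nonneg fun _ => sq_nonneg _
  have hΔ_le : ∀ t ω, ‖Δ (t + 1) ω‖ ^ 2 ≤ (1 + β) * ‖e t ω‖ ^ 2 + (1 + 1 / β) * ‖x t ω‖ ^ 2 :=
    fun t ω => hΔ t ω ▸ norm_add_sq_le_mul_sq_add_mul_sq _ _ hβ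
  have he_le : ∀ t ω, ‖e (t + 1) ω‖ ^ 2
      ≤ (1 - δ) * (1 + β) * ‖e t ω‖ ^ 2 + (1 - δ) * ((1 + 1 / β) * ‖x t ω‖ ^ 2) := by
    intro t ω
    have := mul_le_mul_of_nonneg_left (hΔ_le t ω) (sub_nonneg.mpr hδ)
    rw [he]
    linarith [hC.norm_sub_apply_sq_le (Δ (t + 1) ω)]
  have herr := of_le_mul_add (u := fun t ω => ‖e t ω‖ ^ 2) (by positivity) hρ (by positivity)
    (fun ω => by simp [he0]) he_le
    (fun t => ((hx t).const_mul (by positivity : 0 ≤ 1 + 1 / β)).const_mul (sub_nonneg.mpr hδ))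
  refine ((herr t).const_mul (by positivity)).add ((hx t).const_mul (by positivity)) |>.mono
    (hΔ_le t) (le_of_eq ?_)
  linear_combination (-((1 + 1 / β) * X)) * mul_inv_cancel₀ (sub_pos.mpr hρ).ne'

/-- `β = (1 - s)/s` with `s = √(1 - δ)` minimises the constant of
`error_feedback_update_majorant`; this is where `1 / (1 - √(1 - δ))²` comes from. -/
lemma error_feedback_error_majorant {C : E → E} {δ X : ℝ} (hC : IsApproxCompressor δ C)
    (hδ0 : 0 < δ) (hδ1 : δ < 1) {e Δ x : ℕ → Ω → E}
    (he0 : ∀ ω, e 0 ω = 0) (hΔ : ∀ t ω, Δ (t + 1) ω = e t ω + x t ω)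
    (he : ∀ t ω, e (t + 1) ω = Δ (t + 1) ω - C (Δ (t + 1) ω))
    (hx : ∀ t, HasIntegrableMajorant P (fun ω => ‖x t ω‖ ^ 2) X) (t : ℕ) :
    HasIntegrableMajorant P (fun ω => ‖e (t + 1) ω‖ ^ 2)
      ((1 - δ) / (1 - Real.sqrt (1 - δ)) ^ 2 * X) := by
  set s := Real.sqrt (1 - δ)
  have hs2 : s ^ 2 = 1 - δ := Real.sq_sqrt (by linarith)
  have hs0 : 0 < s := Real.sqrt_pos.mpr (by linarith)
  have hs1 : s < 1 := by nlinarith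
  have hβ : 0 < (1 - s) / s := div_pos (by linarith) hs0
  have hρ : (1 - δ) * (1 + (1 - s) / s) = s := by
    rw [← hs2]; field_simp; ring
  have hΔ_maj :=
    error_feedback_update_majorant hC hδ1.le hβ (by rw [hρ]; exact hs1) he0 hΔ he hx t
  refine (hΔ_maj.const_mul (sub_nonneg.mpr hδ1.le)).mono
    (fun ω => he t ω ▸ hC.norm_sub_apply_sq_le _) (le_of_eq ?_)
  rw [hρ]
  field_simp [(by linarith : 1 - s ≠ 0)]
  ring

end ErrorFeedback

section Momentum

variable {E : Type*} [SeminormedAddCommGroup E] [NormedSpace ℝ E]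
  {Ω : Type*} [MeasurableSpace Ω] {P : Measure Ω}

lemma norm_smul_add_sq_le (x y : E) {μ : ℝ} (hμ0 : 0 ≤ μ) (hμ1 : μ < 1) :
    ‖μ • x + y‖ ^ 2 ≤ μ * ‖x‖ ^ 2 + (1 - μ)⁻¹ * ‖y‖ ^ 2 := by
  have hnorm : ‖μ • x + y‖ ≤ μ * ‖x‖ + ‖y‖ := by
    simpa [norm_smul, abs_of_nonneg hμ0] using norm_add_le (μ • x) y
  have hconv : (μ * ‖x‖ + ‖y‖) ^ 2 ≤ μ * ‖x‖ ^ 2 + (1 - μ)⁻¹ * ‖y‖ ^ 2 := by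
    have h1μ : 0 < 1 - μ := by linarith
    rw [← sub_le_iff_le_add', inv_mul_eq_div, le_div_iff₀ h1μ]
    nlinarith [mul_nonneg hμ0 (sq_nonneg ((1 - μ) * ‖x‖ - ‖y‖))]
  exact (pow_le_pow_left₀ (norm_nonneg _) hnorm 2).trans hconv

lemma norm_inv_card_smul_sum_sq_le {ι : Type*} (s : Finset ι) (x : ι → E) :
    ‖(#s : ℝ)⁻¹ • ∑ i ∈ s, x i‖ ^ 2 ≤ (#s : ℝ)⁻¹ * ∑ i ∈ s, ‖x i‖ ^ 2 := by
  rcases s.eq_empty_or_nonempty with rfl | hs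
  · simp
  have hcard : (0 : ℝ) < #s := by exact_mod_cast hs.card_pos
  have hsum : ‖∑ i ∈ s, x i‖ ^ 2 ≤ #s * ∑ i ∈ s, ‖x i‖ ^ 2 :=
    (pow_le_pow_left₀ (norm_nonneg _) (norm_sum_le s x) 2).trans
      (sq_sum_le_card_mul_sum_sq ..)
  calc ‖(#s : ℝ)⁻¹ • ∑ i ∈ s, x i‖ ^ 2 = (#s : ℝ)⁻¹ ^ 2 * ‖∑ i ∈ s, x i‖ ^ 2 := by
        rw [norm_smul, Real.norm_of_nonneg (by positivity), mul_pow]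
    _ ≤ (#s : ℝ)⁻¹ ^ 2 * (#s * ∑ i ∈ s, ‖x i‖ ^ 2) := by gcongr
    _ = (#s : ℝ)⁻¹ * ∑ i ∈ s, ‖x i‖ ^ 2 := by field_simp

lemma HasIntegrableMajorant.norm_smul_sq {x : Ω → E} {a b c : ℝ}
    (h : HasIntegrableMajorant P (fun ω => ‖x ω‖ ^ 2) c) (hab : |a| ≤ b) :
    HasIntegrableMajorant P (fun ω => ‖a • x ω‖ ^ 2) (b ^ 2 * c) := by
  refine (h.const_mul (sq_nonneg b)).mono (fun ω => ?_) le_rfl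
  rw [norm_smul, mul_pow, Real.norm_eq_abs]
  gcongr

lemma HasIntegrableMajorant.norm_sq_average {ι : Type*} (s : Finset ι) {x : ι → Ω → E} {c : ℝ}
    (hc : 0 ≤ c) (h : ∀ i ∈ s, HasIntegrableMajorant P (fun ω => ‖x i ω‖ ^ 2) c) :
    HasIntegrableMajorant P (fun ω => ‖(#s : ℝ)⁻¹ • ∑ i ∈ s, x i ω‖ ^ 2) c := by
  refine ((sum s h).const_mul (by positivity)).mono
    (fun ω => norm_inv_card_smul_sum_sq_le s _) ?_
  rw [sum_const, nsmul_eq_mul, ← mul_assoc]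
  rcases (#s).eq_zero_or_pos with hs | hs
  · simp [hs, hc]
  · rw [inv_mul_cancel₀ (by positivity), one_mul]

lemma momentum_majorant {m g : ℕ → Ω → E} {μ S : ℝ} (hμ0 : 0 ≤ μ) (hμ1 : μ < 1)
    (hm0 : ∀ ω, m 0 ω = 0) (hm : ∀ t ω, m (t + 1) ω = μ • m t ω + g t ω)
    (hg : ∀ t, HasIntegrableMajorant P (fun ω => ‖g t ω‖ ^ 2) S) (t : ℕ) :
    HasIntegrableMajorant P (fun ω => ‖m t ω‖ ^ 2) (S / (1 - μ) ^ 2) := by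
  have hS : 0 ≤ S := (hg 0).nonneg fun _ => sq_nonneg _
  have h1μ : 0 < 1 - μ := by linarith
  have key := of_le_mul_add (u := fun t ω => ‖m t ω‖ ^ 2) hμ0 hμ1 (by positivity)
    (fun ω => by simp [hm0]) (fun t ω => hm t ω ▸ norm_smul_add_sq_le _ _ hμ0 hμ1)
    (fun t => (hg t).const_mul (inv_nonneg.mpr h1μ.le)) t
  exact key.mono (fun _ => le_rfl) (le_of_eq (by field_simp))

end Momentum

theorem server_error_second_moment_bound_general
    {Ω : Type*} [MeasurableSpace Ω] (P : Measure Ω)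
    {d K : ℕ}
    (μ M σ δ ηmax : ℝ) (hμ0 : 0 ≤ μ) (hμ1 : μ < 1)
    (hδ0 : 0 < δ) (hδ1 : δ < 1)
    (Co : EuclideanSpace ℝ (Fin d) → EuclideanSpace ℝ (Fin d))
    (hCo : ∀ v, ‖Co v - v‖ ^ 2 ≤ (1 - δ) * ‖v‖ ^ 2)
    (η : ℕ → ℝ) (hη0 : ∀ t, 0 < η t) (hηmax : ∀ t, η t ≤ ηmax)
    (g m e : Fin K → ℕ → Ω → EuclideanSpace ℝ (Fin d))
    (esrv : ℕ → Ω → EuclideanSpace ℝ (Fin d))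
    (hgL2 : ∀ k t, MemLp (g k t) 2 P)
    (hgbound : ∀ k t, ∫ ω, ‖g k t ω‖ ^ 2 ∂P ≤ M ^ 2 + σ ^ 2)
    (hm0 : ∀ k ω, m k 0 ω = 0) (he0 : ∀ k ω, e k 0 ω = 0)
    (hesrv0 : ∀ ω, esrv 0 ω = 0)
    (hm : ∀ k t ω, m k (t + 1) ω = μ • m k t ω + g k t ω)
    (Δ : Fin K → ℕ → Ω → EuclideanSpace ℝ (Fin d))
    (hΔ : ∀ k t ω, Δ k (t + 1) ω = e k t ω + η t • m k (t + 1) ω)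
    (he : ∀ k t ω, e k (t + 1) ω = Δ k (t + 1) ω - Co (Δ k (t + 1) ω))
    (Δsrv : ℕ → Ω → EuclideanSpace ℝ (Fin d))
    (hΔsrv : ∀ t ω, Δsrv (t + 1) ω = esrv t ω + (K : ℝ)⁻¹ • ∑ k, Co (Δ k (t + 1) ω))
    (hesrv : ∀ t ω, esrv (t + 1) ω = Δsrv (t + 1) ω - Co (Δsrv (t + 1) ω)) :
    ∀ β₁ : ℝ, 0 < β₁ → β₁ < δ / (1 - δ) → ∀ t,
      ∫ ω, ‖esrv (t + 1) ω‖ ^ 2 ∂P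
        ≤ ((1 - δ) / (1 - Real.sqrt (1 - δ)) ^ 2)
            * (2 * (2 - δ) * (1 + 1 / β₁) / (1 - (1 - δ) * (1 + β₁)))
            * (ηmax ^ 2 * (M ^ 2 + σ ^ 2) / (1 - μ) ^ 2) := by
  intro β₁ hβ₁ hβ₁δ t
  have hC : IsApproxCompressor δ Co := hCo
  have hρ : 0 < 1 - (1 - δ) * (1 + β₁) := by
    rw [lt_div_iff₀ (by linarith)] at hβ₁δ; linarith
  have hg k t : HasIntegrableMajorant P (fun ω => ‖g k t ω‖ ^ 2) (M ^ 2 + σ ^ 2) :=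
    .of_integrable ((hgL2 k t).integrable_norm_pow two_ne_zero) (hgbound k t)
  have hstep k t := (momentum_majorant hμ0 hμ1 (hm0 k) (hm k) (hg k) (t + 1)).norm_smul_sq
    ((abs_of_pos (hη0 t)).le.trans (hηmax t))
  have hworker k t :=
    error_feedback_update_majorant hC hδ1.le hβ₁ (by linarith) (he0 k) (hΔ k) (he k) (hstep k) t
  have hcompressed k t := ((hworker k t).const_mul (by linarith : (0 : ℝ) ≤ 2 * (2 - δ))).mono
    (fun ω => hC.norm_apply_sq_le (Δ k (t + 1) ω)) le_rfl
  have haverage t := HasIntegrableMajorant.norm_sq_average univ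
    (mul_nonneg (by linarith) (by positivity)) (fun k _ => hcompressed k t)
  simp only [card_univ, Fintype.card_fin] at haverage
  refine ((error_feedback_error_majorant hC hδ0 hδ1 hesrv0 hΔsrv hesrv haverage t).integral_le
    fun _ => sq_nonneg _).trans_eq ?_
  ring

/-- Bound on the server-side compression error of SAEF-SGD with momentum under
double-way compression: for every `β₁ ∈ (0, δ/(1−δ))` and every `t`,
`E‖e_{t+1}‖² ≤ (1−δ)/(1−√(1−δ))² · [2(2−δ)(1+1/β₁)/(1−(1−δ)(1+β₁))]
              · η_max²(M²+σ²)/(1−μ)²`. -/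
theorem server_error_second_moment_bound
    {Ω : Type*} [MeasurableSpace Ω] (P : Measure Ω) [IsProbabilityMeasure P]
    {d K : ℕ} (hK : 1 ≤ K)
    (μ M σ δ ηmax : ℝ) (hμ0 : 0 ≤ μ) (hμ1 : μ < 1)
    (hM : 0 ≤ M) (hσ : 0 ≤ σ) (hδ0 : 0 < δ) (hδ1 : δ < 1)
    (Co : EuclideanSpace ℝ (Fin d) → EuclideanSpace ℝ (Fin d))
    (hCo : ∀ v, ‖Co v - v‖ ^ 2 ≤ (1 - δ) * ‖v‖ ^ 2)
    (η : ℕ → ℝ) (hη0 : ∀ t, 0 < η t) (hηmax : ∀ t, η t ≤ ηmax)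
    (g m e : Fin K → ℕ → Ω → EuclideanSpace ℝ (Fin d))
    (esrv : ℕ → Ω → EuclideanSpace ℝ (Fin d))
    (hgL2 : ∀ k t, MemLp (g k t) 2 P)
    (hgbound : ∀ k t, ∫ ω, ‖g k t ω‖ ^ 2 ∂P ≤ M ^ 2 + σ ^ 2)
    (hm0 : ∀ k ω, m k 0 ω = 0) (he0 : ∀ k ω, e k 0 ω = 0)
    (hesrv0 : ∀ ω, esrv 0 ω = 0)
    (hm : ∀ k t ω, m k (t + 1) ω = μ • m k t ω + g k t ω)
    (Δ : Fin K → ℕ → Ω → EuclideanSpace ℝ (Fin d))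
    (hΔ : ∀ k t ω, Δ k (t + 1) ω = e k t ω + η t • m k (t + 1) ω)
    (he : ∀ k t ω, e k (t + 1) ω = Δ k (t + 1) ω - Co (Δ k (t + 1) ω))
    (Δsrv : ℕ → Ω → EuclideanSpace ℝ (Fin d))
    (hΔsrv : ∀ t ω, Δsrv (t + 1) ω = esrv t ω + (K : ℝ)⁻¹ • ∑ k, Co (Δ k (t + 1) ω))
    (hesrv : ∀ t ω, esrv (t + 1) ω = Δsrv (t + 1) ω - Co (Δsrv (t + 1) ω)) :
    ∀ β₁ : ℝ, 0 < β₁ → β₁ < δ / (1 - δ) → ∀ t,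
      ∫ ω, ‖esrv (t + 1) ω‖ ^ 2 ∂P
        ≤ ((1 - δ) / (1 - Real.sqrt (1 - δ)) ^ 2)
            * (2 * (2 - δ) * (1 + 1 / β₁) / (1 - (1 - δ) * (1 + β₁)))
            * (ηmax ^ 2 * (M ^ 2 + σ ^ 2) / (1 - μ) ^ 2) :=
  server_error_second_moment_bound_general P μ M σ δ ηmax hμ0 hμ1 hδ0 hδ1 Co hCo η hη0 hηmax g m e
    esrv hgL2 hgbound hm0 he0 hesrv0 hm Δ hΔ he Δsrv hΔsrv hesrv
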